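/- Every normal, faithful, standard linkage-based hierarchical clustering method 𝔗 = 𝔗(ℓ,∅) is semi-stable in the Gromov–Hausdorff sense: for every sequence (X_k,d_k) of finite metric spaces and every finite ultrametric space (U,u) with d_GH((X_k,d_k),(U,u)) → 0 as k → ∞, one has d_GH(𝔗_U(X_k,d_k),(U,u)) → 0. -/

import Mathlib

/-- A distance function `d` is a metric. -/
def IsMetric {X : Type*} (d : X → X → ℝ) : Prop :=
  (∀ x y, d x y = d y x) ∧ (∀ x y, d x y = 0 ↔ x = y) ∧ (∀ x y z, d x z ≤ d x y + d y z)

/-- A distance function is an ultrametric: a metric satisfying the strong triangle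
inequality. -/
def IsUltrametricD {X : Type*} (d : X → X → ℝ) : Prop :=
  IsMetric d ∧ ∀ x y z, d x z ≤ max (d x y) (d y z)

/-- The maximum of the consecutive distances along the chain `x :: l ++ [y]`. -/
def chainMax {X : Type*} (d : X → X → ℝ) : X → List X → X → ℝ
  | x, [], y => d x y
  | x, z :: l, y => max (d x z) (chainMax d z l y)

/-- The single-linkage ultrametric: the minimum over all chains from `x` to `y`
of the maximum of the consecutive distances along the chain. -/
noncomputable def uSL {X : Type*} (d : X → X → ℝ) (x y : X) : ℝ :=
  sInf { r | ∃ l : List X, chainMax d x l y = r }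

/-- A correspondence between `X` and `Y`: every point of `X` and every point of `Y`
occurs in some pair. -/
def IsCorr {X Y : Type*} (τ : Set (X × Y)) : Prop :=
  (∀ x, ∃ y, (x, y) ∈ τ) ∧ (∀ y, ∃ x, (x, y) ∈ τ)

/-- The distortion of a correspondence: the supremum of `|d_X(x,x') − d_Y(y,y')|`
over pairs `(x,y), (x',y')` in the correspondence. -/
noncomputable def corrDist {X Y : Type*} (dX : X → X → ℝ) (dY : Y → Y → ℝ)
    (τ : Set (X × Y)) : ℝ :=
  sSup { v | ∃ p ∈ τ, ∃ q ∈ τ, v = |dX p.1 q.1 - dY p.2 q.2| }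

/-- The Gromov–Hausdorff distance: half the infimum over correspondences of their
distortion. -/
noncomputable def ghDist {X Y : Type*} (dX : X → X → ℝ) (dY : Y → Y → ℝ) : ℝ :=
  (1 / 2) * sInf { r | ∃ τ : Set (X × Y), IsCorr τ ∧ corrDist dX dY τ = r }

/-- Single linkage value between two blocks: minimal cross distance. -/
noncomputable def ellSL {X : Type*} (d : X → X → ℝ) (A B : Finset X) : ℝ :=
  sInf { r | ∃ a ∈ A, ∃ b ∈ B, d a b = r }

/-- Complete linkage value between two blocks: maximal cross distance. -/
noncomputable def ellCL {X : Type*} (d : X → X → ℝ) (A B : Finset X) : ℝ :=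
  sSup { r | ∃ a ∈ A, ∃ b ∈ B, d a b = r }

/-- Average linkage value between two blocks: average cross distance. -/
noncomputable def ellAL {X : Type*} (d : X → X → ℝ) (A B : Finset X) : ℝ :=
  (∑ a ∈ A, ∑ b ∈ B, d a b) / (A.card * B.card)

open Classical in
/-- The block (equivalence class) of `x` under the relation `e`. -/
noncomputable def cls {X : Type*} [Fintype X] (e : X → X → Prop) (x : X) : Finset X :=
  Finset.univ.filter fun y => e x y

/-- The minimal linkage value `R_i = min{ℓ(B,B') : B ≠ B' ∈ Θ_i}` over pairs of
distinct blocks of the partition given by the relation `e`. -/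
noncomputable def nextR {X : Type*} [Fintype X] (ℓ : Finset X → Finset X → ℝ)
    (e : X → X → Prop) : ℝ :=
  sInf { r | ∃ x y : X, ¬ e x y ∧ ℓ (cls e x) (cls e y) = r }

/-- Merge the blocks of `e` along the equivalence relation generated by
`ℓ(B,B') ≤ R` on blocks. -/
def mergeRel {X : Type*} [Fintype X] (ℓ : Finset X → Finset X → ℝ)
    (e : X → X → Prop) (R : ℝ) : X → X → Prop :=
  Relation.EqvGen fun a b => e a b ∨ ℓ (cls e a) (cls e b) ≤ R

open Classical in
/-- One step of the standard linkage-based recursion; the state is the pair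
(current partition, given as a relation; current merging scale).  Once the partition
is the one-block partition the state is frozen. -/
noncomputable def stdStep {X : Type*} [Fintype X] (ℓ : Finset X → Finset X → ℝ) :
    (X → X → Prop) × ℝ → (X → X → Prop) × ℝ :=
  fun s => if ∀ x y, s.1 x y then s else (mergeRel ℓ s.1 (nextR ℓ s.1), nextR ℓ s.1)

/-- The sequence of states `(Θ_{i+1}, R_i)` of the standard linkage-based recursion
`𝔗(ℓ,∅)`, starting with the partition into singletons at scale `R₀ = 0`. -/
noncomputable def stdState {X : Type*} [Fintype X] (ℓ : Finset X → Finset X → ℝ) :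
    ℕ → (X → X → Prop) × ℝ
  | 0 => (Eq, 0)
  | i + 1 => stdStep ℓ (stdState ℓ i)

/-- The dendrogram of the standard linkage-based method: `x ∼ y` at scale `r` iff
they lie in a common block of `θ(r) = Θ_{max{i : R_i ≤ r}}` (for the nested partitions
`Θ_i` this is equivalent to lying in a common block of some `Θ_i` with `R_i ≤ r`). -/
def dendroRel {X : Type*} [Fintype X] (ℓ : Finset X → Finset X → ℝ) (r : ℝ)
    (x y : X) : Prop :=
  ∃ i, (stdState ℓ i).2 ≤ r ∧ (stdState ℓ i).1 x y

/-- The output ultrametric of the standard linkage-based method `𝔗(ℓ,∅)`: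
`u(x,y)` is the least scale `r ≥ 0` at which `x` and `y` lie in a common block of
the dendrogram. -/
noncomputable def stdUltra {X : Type*} [Fintype X] (ℓ : Finset X → Finset X → ℝ)
    (x y : X) : ℝ :=
  sInf { r | 0 ≤ r ∧ dendroRel ℓ r x y }

/-- A finite (nonempty) metric space, packaged with carrier `Fin n`. -/
structure FinMetricSpace where
  n : ℕ
  pos : 0 < n
  d : Fin n → Fin n → ℝ
  metric : IsMetric d

/-- `L` is a linkage function: a nonnegative, representation independent and
monotonic assignment of a real number to every pair of disjoint nonempty finite
blocks equipped with a distance function on the ambient space, such that any pair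
of blocks can be made arbitrarily distant by enlarging the cross distances. -/
def IsLinkage
    (L : ∀ n : ℕ, (Fin n → Fin n → ℝ) → Finset (Fin n) → Finset (Fin n) → ℝ) : Prop :=
  -- nonnegative
  (∀ n d (B1 B2 : Finset (Fin n)), 0 ≤ L n d B1 B2) ∧
  -- representation independent: `L` only depends on the clustering-isomorphism type
  -- of `(B₁, B₂, d|_{B₁∪B₂})`
  (∀ (n m : ℕ) (d : Fin n → Fin n → ℝ) (d' : Fin m → Fin m → ℝ)
      (B1 B2 : Finset (Fin n)) (φ : Fin n → Fin m),
      B1.Nonempty → B2.Nonempty → Disjoint B1 B2 →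
      (∀ x ∈ B1 ∪ B2, ∀ y ∈ B1 ∪ B2, φ x = φ y → x = y) →
      (∀ x ∈ B1 ∪ B2, ∀ y ∈ B1 ∪ B2, d' (φ x) (φ y) = d x y) →
      L m d' (B1.image φ) (B2.image φ) = L n d B1 B2) ∧
  -- monotonic: keeping the within-block distances and increasing the cross
  -- distances does not decrease `L`
  (∀ (n : ℕ) (d d' : Fin n → Fin n → ℝ) (B1 B2 : Finset (Fin n)),
      B1.Nonempty → B2.Nonempty → Disjoint B1 B2 →
      (∀ x y, (x ∈ B1 ∧ y ∈ B1) ∨ (x ∈ B2 ∧ y ∈ B2) → d' x y = d x y) →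
      (∀ x y, (x ∈ B1 ∧ y ∈ B2) ∨ (x ∈ B2 ∧ y ∈ B1) → d x y ≤ d' x y) →
      L n d B1 B2 ≤ L n d' B1 B2) ∧
  -- any pair of clusters can be made arbitrarily distant
  (∀ (n : ℕ) (d : Fin n → Fin n → ℝ) (B1 B2 : Finset (Fin n)),
      B1.Nonempty → B2.Nonempty → Disjoint B1 B2 → ∀ r : ℝ,
      ∃ d' : Fin n → Fin n → ℝ,
        (∀ x y, (x ∈ B1 ∧ y ∈ B1) ∨ (x ∈ B2 ∧ y ∈ B2) → d' x y = d x y) ∧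
        r < L n d' B1 B2) 

/-!
A finite ultrametric space `(U, u)` has a gap `γ > 0` between any two distinct distance
values. Let a correspondence match `X` with `U` up to distortion `δ`, with `3δ < γ`, and
let `σ : X → U` follow it. The output ultrametric `w` of the method dominates single
linkage, and single linkage already sees `u ∘ σ` up to `δ`, so `u(σx, σy) - δ ≤ w(x, y)`.
Conversely, if `x` and `y` were still apart at scale `t = u(σx, σy) + 2δ`, every point of
their blocks at scale `t` would be `u ∘ σ`-within `t + δ < u(σx, σy) + γ`, hence (by the gap)
within `u(σx, σy)`, of `x` resp. `y`. By the strong triangle inequality the complete linkage of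
the two blocks, and with it their linkage, would be at most `u(σx, σy) + δ < t`, so the two
blocks would merge at a scale `≤ t`. Hence `|w(x, y) - u(σx, σy)| ≤ 2δ`, the same
correspondence has distortion at most `4δ` for `w`, and `d_GH(w, u) ≤ 4 d_GH(d, u)` as soon as
`6 d_GH(d, u) < γ`.
-/

open Filter Topology

section Metric

variable {X : Type*} {d : X → X → ℝ}

lemma IsMetric.self_eq_zero (hd : IsMetric d) (x : X) : d x x = 0 :=
  (hd.2.1 x x).2 rfl

lemma IsMetric.nonneg (hd : IsMetric d) (x y : X) : 0 ≤ d x y := by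
  have h := hd.2.2 x y x
  rw [hd.self_eq_zero, hd.1 y x] at h
  linarith

lemma IsMetric.abs_sub_le (hd : IsMetric d) (a b a' b' : X) :
    |d a b - d a' b'| ≤ d a a' + d b b' := by
  have h₁ := hd.2.2 a a' b
  have h₂ := hd.2.2 a' b' b
  have h₃ := hd.2.2 a' a b'
  have h₄ := hd.2.2 a b b'
  rw [hd.1 a' a] at h₃
  rw [hd.1 b' b] at h₂
  rw [abs_le]
  constructor <;> linarith

end Metric

section Chain

variable {X : Type*}

lemma le_chainMax {v : X → X → ℝ} (hv : ∀ a b c, v a c ≤ max (v a b) (v b c)) :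
    ∀ (l : List X) (x y : X), v x y ≤ chainMax v x l y
  | [], _, _ => le_rfl
  | z :: l, x, y => (hv x z y).trans (max_le_max le_rfl (le_chainMax hv l z y))

lemma chainMax_le_chainMax_add {v d : X → X → ℝ} {δ : ℝ} (h : ∀ a b, v a b ≤ d a b + δ) :
    ∀ (l : List X) (x y : X), chainMax v x l y ≤ chainMax d x l y + δ
  | [], x, y => h x y
  | z :: l, x, y =>
      max_le ((h x z).trans (by gcongr; exact le_max_left _ _))
        ((chainMax_le_chainMax_add h l z y).trans (by gcongr; exact le_max_right _ _))

lemma le_uSL_add {v d : X → X → ℝ} {δ : ℝ} (hv : ∀ a b c, v a c ≤ max (v a b) (v b c))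
    (h : ∀ a b, v a b ≤ d a b + δ) (x y : X) : v x y ≤ uSL d x y + δ := by
  rw [← sub_le_iff_le_add]
  refine le_csInf ⟨d x y, [], rfl⟩ ?_
  rintro _ ⟨l, rfl⟩
  linarith [le_chainMax hv l x y, chainMax_le_chainMax_add h l x y]

end Chain

lemma ellCL_le {X : Type*} {d : X → X → ℝ} {A B : Finset X} {c : ℝ}
    (h : ∀ a ∈ A, ∀ b ∈ B, d a b ≤ c) (hc : 0 ≤ c) : ellCL d A B ≤ c :=
  Real.sSup_le (by rintro _ ⟨a, ha, b, hb, rfl⟩; exact h a ha b hb) hc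

section Linkage

variable {X : Type*} [Fintype X] (ℓ : Finset X → Finset X → ℝ)

lemma mem_cls {e : X → X → Prop} {x y : X} : y ∈ cls e x ↔ e x y := by
  simp [cls]

lemma finite_nextR_values (e : X → X → Prop) :
    {r | ∃ x y : X, ¬ e x y ∧ ℓ (cls e x) (cls e y) = r}.Finite :=
  (Set.finite_range fun p : X × X => ℓ (cls e p.1) (cls e p.2)).subset
    (by rintro _ ⟨x, y, -, rfl⟩; exact ⟨(x, y), rfl⟩)

lemma nextR_le {e : X → X → Prop} {x y : X} (h : ¬ e x y) :
    nextR ℓ e ≤ ℓ (cls e x) (cls e y) :=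
  csInf_le (finite_nextR_values ℓ e).bddBelow ⟨x, y, h, rfl⟩

lemma exists_eq_nextR {e : X → X → Prop} (h : ¬ ∀ x y, e x y) :
    ∃ x y, ¬ e x y ∧ ℓ (cls e x) (cls e y) = nextR ℓ e := by
  push Not at h
  obtain ⟨x, y, hxy⟩ := h
  exact Set.Nonempty.csInf_mem (s := {r | ∃ x y : X, ¬ e x y ∧ ℓ (cls e x) (cls e y) = r})
    ⟨_, x, y, hxy, rfl⟩ (finite_nextR_values ℓ e)

lemma stdState_succ_of_not_full {i : ℕ} (h : ¬ ∀ x y, (stdState ℓ i).1 x y) :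
    stdState ℓ (i + 1) =
      (mergeRel ℓ (stdState ℓ i).1 (nextR ℓ (stdState ℓ i).1), nextR ℓ (stdState ℓ i).1) :=
  if_neg h

lemma stdState_fst_le_succ (i : ℕ) : (stdState ℓ i).1 ≤ (stdState ℓ (i + 1)).1 := by
  intro x y h
  by_cases hfull : ∀ x y, (stdState ℓ i).1 x y
  · show (stdStep ℓ (stdState ℓ i)).1 x y
    rw [stdStep, if_pos hfull]
    exact h
  · rw [stdState_succ_of_not_full ℓ hfull]
    exact Relation.EqvGen.rel _ _ (Or.inl h)

lemma monotone_stdState_fst : Monotone fun i => (stdState ℓ i).1 :=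
  monotone_nat_of_le_succ (stdState_fst_le_succ ℓ)

/-- Each step before termination merges at least one pair, and there are finitely many
relations on `X`. -/
lemma exists_stdState_full : ∃ N, ∀ x y : X, (stdState ℓ N).1 x y := by
  by_contra hnone
  push Not at hnone
  have hmono : StrictMono fun i => (stdState ℓ i).1 := by
    refine strictMono_nat_of_lt_succ fun i => lt_of_le_not_ge (stdState_fst_le_succ ℓ i) ?_
    have hfull : ¬ ∀ x y, (stdState ℓ i).1 x y := by
      obtain ⟨x, y, hxy⟩ := hnone i
      exact fun h => hxy (h x y)
    obtain ⟨a, b, hab, hR⟩ := exists_eq_nextR ℓ hfull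
    intro hle
    refine hab (hle a b ?_)
    rw [stdState_succ_of_not_full ℓ hfull]
    exact Relation.EqvGen.rel _ _ (Or.inr hR.le)
  exact not_injective_infinite_finite _ hmono.injective

lemma stdUltra_le {x y : X} {t : ℝ} (ht : 0 ≤ t) (h : dendroRel ℓ t x y) :
    stdUltra ℓ x y ≤ t :=
  csInf_le ⟨0, fun _ hr => hr.1⟩ ⟨ht, h⟩

/-- The dendrogram at scale `t` is `Θ_i` for the last `i` with `R_i ≤ t`. -/
lemma lt_nextR_dendroRel {t : ℝ} (ht : 0 ≤ t) {x y : X} (hxy : ¬ dendroRel ℓ t x y) :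
    t < nextR ℓ (dendroRel ℓ t) := by
  classical
  obtain ⟨N, hN⟩ := exists_stdState_full ℓ
  have hlt : ∀ i, (stdState ℓ i).2 ≤ t → i < N := fun i hi => by
    by_contra hle
    exact hxy ⟨i, hi, monotone_stdState_fst ℓ (not_lt.mp hle) x y (hN x y)⟩
  let P : ℕ → Prop := fun i => (stdState ℓ i).2 ≤ t
  set i₀ := Nat.findGreatest P N
  have hi₀ : P i₀ := Nat.findGreatest_spec (P := P) (Nat.zero_le N) ht
  have heq : (stdState ℓ i₀).1 = dendroRel ℓ t := by
    ext a b
    refine ⟨fun h => ⟨i₀, hi₀, h⟩, fun ⟨i, hi, h⟩ => ?_⟩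
    exact monotone_stdState_fst ℓ (Nat.le_findGreatest (P := P) (hlt i hi).le hi) a b h
  have hfull : ¬ ∀ a b, (stdState ℓ i₀).1 a b := by
    rw [heq]
    exact fun h => hxy (h x y)
  rw [← heq]
  by_contra hle
  have hsucc : (stdState ℓ (i₀ + 1)).2 ≤ t := by
    rw [stdState_succ_of_not_full ℓ hfull]
    exact not_lt.mp hle
  have := Nat.le_findGreatest (P := P) (hlt _ hsucc).le hsucc
  omega

end Linkage

def IsValueGap {ι : Type*} (f : ι → ℝ) (γ : ℝ) : Prop :=
  ∀ i j, f i < f j → f i + γ ≤ f j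

lemma exists_isValueGap {ι : Type*} [Finite ι] (f : ι → ℝ) : ∃ γ > 0, IsValueGap f γ := by
  have h : ∀ᶠ γ in 𝓝[>] (0 : ℝ), 0 < γ ∧ ∀ p : ι × ι, f p.1 < f p.2 → f p.1 + γ ≤ f p.2 := by
    refine (eventually_mem_nhdsWithin (a := 0) (s := Set.Ioi 0)).and
      (eventually_all.2 fun p => ?_)
    by_cases hp : f p.1 < f p.2
    · filter_upwards [nhdsWithin_le_nhds (eventually_lt_nhds (sub_pos.2 hp))] with γ hγ _
      linarith
    · exact Eventually.of_forall fun _ h => absurd h hp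
  obtain ⟨γ, hγ, hgap⟩ := h.exists
  exact ⟨γ, hγ, fun i j => hgap (i, j)⟩

/-- Normality of the method, at the single space `(X, d)`. -/
def IsNormalLinkage {X : Type*} [Fintype X] (d : X → X → ℝ)
    (ℓ : Finset X → Finset X → ℝ) : Prop :=
  (∀ r, 0 ≤ r → ∀ x y, ¬ dendroRel ℓ r x y →
    ℓ (cls (dendroRel ℓ r) x) (cls (dendroRel ℓ r) y) ≤
      ellCL d (cls (dendroRel ℓ r) x) (cls (dendroRel ℓ r) y)) ∧
  ∀ x y, uSL d x y ≤ stdUltra ℓ x y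

section Approximation

variable {X Y : Type*} [Fintype X] {d : X → X → ℝ} {u : Y → Y → ℝ}
  {ℓ : Finset X → Finset X → ℝ} {σ : X → Y} {δ γ : ℝ}

lemma le_stdUltra_add (hu : IsUltrametricD u) (hℓ : IsNormalLinkage d ℓ)
    (hσ : ∀ x y, |d x y - u (σ x) (σ y)| ≤ δ) (x y : X) :
    u (σ x) (σ y) ≤ stdUltra ℓ x y + δ := by
  have h : u (σ x) (σ y) ≤ uSL d x y + δ :=
    le_uSL_add (fun a b c => hu.2 (σ a) (σ b) (σ c))
      (fun a b => by linarith [(abs_le.1 (hσ a b)).1]) x y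
  linarith [hℓ.2 x y]

lemma dendroRel_add_two_mul (hu : IsUltrametricD u) (hℓ : IsNormalLinkage d ℓ)
    (hγ : IsValueGap (Function.uncurry u) γ) (hδγ : 3 * δ < γ)
    (hσ : ∀ x y, |d x y - u (σ x) (σ y)| ≤ δ) (x y : X) :
    dendroRel ℓ (u (σ x) (σ y) + 2 * δ) x y := by
  set t := u (σ x) (σ y) + 2 * δ
  have hδ : 0 ≤ δ := (abs_nonneg _).trans (hσ x x)
  have hxy₀ : 0 ≤ u (σ x) (σ y) := hu.1.nonneg _ _
  have ht : 0 ≤ t := by positivity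
  by_contra hxy
  have hblock : ∀ z a, dendroRel ℓ t z a → u (σ z) (σ a) ≤ u (σ x) (σ y) := by
    intro z a hza
    by_contra! hlt
    have h₁ : u (σ x) (σ y) + γ ≤ u (σ z) (σ a) := hγ (σ x, σ y) (σ z, σ a) hlt
    linarith [le_stdUltra_add hu hℓ hσ z a, stdUltra_le ℓ ht hza]
  have hcross : ∀ a ∈ cls (dendroRel ℓ t) x, ∀ b ∈ cls (dendroRel ℓ t) y,
      d a b ≤ u (σ x) (σ y) + δ := by
    intro a ha b hb
    have hab : u (σ a) (σ b) ≤ u (σ x) (σ y) := calc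
      u (σ a) (σ b) ≤ max (u (σ a) (σ x)) (max (u (σ x) (σ y)) (u (σ y) (σ b))) :=
        (hu.2 _ _ _).trans (max_le_max le_rfl (hu.2 _ _ _))
      _ ≤ u (σ x) (σ y) := by
        rw [hu.1.1 (σ a) (σ x)]
        exact max_le (hblock x a (mem_cls.1 ha)) (max_le le_rfl (hblock y b (mem_cls.1 hb)))
    linarith [(abs_le.1 (hσ a b)).2]
  linarith [lt_nextR_dendroRel ℓ ht hxy, nextR_le ℓ hxy, hℓ.1 t ht x y hxy,
    ellCL_le hcross (by positivity)]

lemma abs_stdUltra_sub_le (hu : IsUltrametricD u) (hℓ : IsNormalLinkage d ℓ)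
    (hγ : IsValueGap (Function.uncurry u) γ) (hδγ : 3 * δ < γ)
    (hσ : ∀ x y, |d x y - u (σ x) (σ y)| ≤ δ) (x y : X) :
    |stdUltra ℓ x y - u (σ x) (σ y)| ≤ 2 * δ := by
  have hδ : 0 ≤ δ := (abs_nonneg _).trans (hσ x x)
  have hup := stdUltra_le ℓ (by linarith [hu.1.nonneg (σ x) (σ y)])
    (dendroRel_add_two_mul hu hℓ hγ hδγ hσ x y)
  exact abs_le.2 ⟨by linarith [le_stdUltra_add hu hℓ hσ x y], by linarith⟩

end Approximation

section GromovHausdorff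

variable {X Y : Type*} {dX : X → X → ℝ} {dY : Y → Y → ℝ} {τ : Set (X × Y)}

lemma abs_sub_le_corrDist [Finite X] [Finite Y] {x y : X} {p q : Y} (hxp : (x, p) ∈ τ)
    (hyq : (y, q) ∈ τ) : |dX x y - dY p q| ≤ corrDist dX dY τ := by
  refine le_csSup ((Set.finite_range fun r : (X × Y) × (X × Y) =>
    |dX r.1.1 r.2.1 - dY r.1.2 r.2.2|).subset ?_).bddAbove ⟨(x, p), hxp, (y, q), hyq, rfl⟩
  rintro _ ⟨a, -, b, -, rfl⟩
  exact ⟨(a, b), rfl⟩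

lemma corrDist_nonneg : 0 ≤ corrDist dX dY τ :=
  Real.sSup_nonneg (by rintro _ ⟨a, -, b, -, rfl⟩; exact abs_nonneg _)

lemma corrDist_le {c : ℝ} (hc : 0 ≤ c)
    (h : ∀ x p y q, (x, p) ∈ τ → (y, q) ∈ τ → |dX x y - dY p q| ≤ c) :
    corrDist dX dY τ ≤ c :=
  Real.sSup_le (by rintro _ ⟨⟨x, p⟩, hxp, ⟨y, q⟩, hyq, rfl⟩; exact h x p y q hxp hyq) hc

lemma ghDist_nonneg : 0 ≤ ghDist dX dY := by
  have : 0 ≤ sInf {r | ∃ τ : Set (X × Y), IsCorr τ ∧ corrDist dX dY τ = r} :=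
    Real.sInf_nonneg (by rintro _ ⟨τ, -, rfl⟩; exact corrDist_nonneg)
  unfold ghDist
  positivity

lemma ghDist_le_corrDist (hτ : IsCorr τ) : ghDist dX dY ≤ corrDist dX dY τ / 2 := by
  have : sInf {r | ∃ τ : Set (X × Y), IsCorr τ ∧ corrDist dX dY τ = r} ≤ corrDist dX dY τ :=
    csInf_le ⟨0, by rintro _ ⟨τ, -, rfl⟩; exact corrDist_nonneg⟩ ⟨τ, hτ, rfl⟩
  unfold ghDist
  linarith

lemma exists_isCorr_corrDist_lt [Nonempty X] [Nonempty Y] {c : ℝ} (h : 2 * ghDist dX dY < c) :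
    ∃ τ : Set (X × Y), IsCorr τ ∧ corrDist dX dY τ < c := by
  have hne : {r | ∃ τ : Set (X × Y), IsCorr τ ∧ corrDist dX dY τ = r}.Nonempty :=
    ⟨_, Set.univ, ⟨fun _ => ⟨Classical.arbitrary Y, trivial⟩,
      fun _ => ⟨Classical.arbitrary X, trivial⟩⟩, rfl⟩
  obtain ⟨_, ⟨τ, hτ, rfl⟩, hlt⟩ := exists_lt_of_csInf_lt hne (by unfold ghDist at h; linarith)
  exact ⟨τ, hτ, hlt⟩

end GromovHausdorff

section Stability

variable {X Y : Type*} [Fintype X] [Finite Y] {d : X → X → ℝ} {u : Y → Y → ℝ}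
  {ℓ : Finset X → Finset X → ℝ} {γ : ℝ}

lemma corrDist_stdUltra_le (hd : IsMetric d) (hu : IsUltrametricD u)
    (hℓ : IsNormalLinkage d ℓ) (hγ : IsValueGap (Function.uncurry u) γ)
    {τ : Set (X × Y)} (hτ : IsCorr τ) (hτγ : 3 * corrDist d u τ < γ) :
    corrDist (stdUltra ℓ) u τ ≤ 4 * corrDist d u τ := by
  set δ := corrDist d u τ
  choose σ hσ using hτ.1
  have hσd : ∀ x y, |d x y - u (σ x) (σ y)| ≤ δ := fun x y =>
    abs_sub_le_corrDist (hσ x) (hσ y)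
  have hnear : ∀ x p, (x, p) ∈ τ → u (σ x) p ≤ δ := fun x p hxp => by
    have h := abs_sub_le_corrDist (dX := d) (dY := u) (hσ x) hxp
    rwa [hd.self_eq_zero, zero_sub, abs_neg, abs_of_nonneg (hu.1.nonneg _ _)] at h
  refine corrDist_le (by linarith [corrDist_nonneg (dX := d) (dY := u) (τ := τ)])
    fun x p y q hxp hyq => ?_
  calc |stdUltra ℓ x y - u p q|
      ≤ |stdUltra ℓ x y - u (σ x) (σ y)| + |u (σ x) (σ y) - u p q| := abs_sub_le _ _ _
    _ ≤ 2 * δ + (u (σ x) p + u (σ y) q) :=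
      add_le_add (abs_stdUltra_sub_le hu hℓ hγ hτγ hσd x y) (hu.1.abs_sub_le _ _ _ _)
    _ ≤ 4 * δ := by linarith [hnear x p hxp, hnear y q hyq]

lemma ghDist_stdUltra_le [Nonempty X] [Nonempty Y] (hd : IsMetric d) (hu : IsUltrametricD u)
    (hℓ : IsNormalLinkage d ℓ) (hγ : IsValueGap (Function.uncurry u) γ)
    (hsmall : 6 * ghDist d u < γ) :
    ghDist (stdUltra ℓ) u ≤ 4 * ghDist d u := by
  refine le_of_forall_gt fun b hb => ?_
  obtain ⟨τ, hτ, hlt⟩ := exists_isCorr_corrDist_lt (dX := d) (dY := u) (c := min (b / 2) (γ / 3))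
    (lt_min (by linarith) (by linarith))
  obtain ⟨hτb, hτγ⟩ := lt_min_iff.1 hlt
  calc ghDist (stdUltra ℓ) u ≤ corrDist (stdUltra ℓ) u τ / 2 := ghDist_le_corrDist hτ
    _ ≤ 4 * corrDist d u τ / 2 := by
      gcongr; exact corrDist_stdUltra_le hd hu hℓ hγ hτ (by linarith)
    _ < b := by linarith

end Stability

instance (M : FinMetricSpace) : Nonempty (Fin M.n) :=
  Fin.pos_iff_nonempty.1 M.pos

theorem stmt18_general
    (L : ∀ n : ℕ, (Fin n → Fin n → ℝ) → Finset (Fin n) → Finset (Fin n) → ℝ)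
    (hnormalCL : ∀ M : FinMetricSpace, ∀ r : ℝ, 0 ≤ r → ∀ x y : Fin M.n,
      ¬ dendroRel (L M.n M.d) r x y →
      L M.n M.d (cls (dendroRel (L M.n M.d) r) x) (cls (dendroRel (L M.n M.d) r) y) ≤
        ellCL M.d (cls (dendroRel (L M.n M.d) r) x) (cls (dendroRel (L M.n M.d) r) y))
    (hnormalSL : ∀ M : FinMetricSpace, ∀ x y : Fin M.n,
      uSL M.d x y ≤ stdUltra (L M.n M.d) x y)
    (Xk : ℕ → FinMetricSpace) (U : FinMetricSpace) (hU : IsUltrametricD U.d)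
    (h : Filter.Tendsto (fun k => ghDist (Xk k).d U.d) Filter.atTop (nhds 0)) :
    Filter.Tendsto (fun k => ghDist (stdUltra (L (Xk k).n (Xk k).d)) U.d)
      Filter.atTop (nhds 0) := by
  obtain ⟨γ, hγ₀, hγ⟩ := exists_isValueGap (Function.uncurry U.d)
  have hsmall : ∀ᶠ k in atTop, 6 * ghDist (Xk k).d U.d < γ :=
    (h.eventually (gt_mem_nhds (by positivity : 0 < γ / 6))).mono fun k hk => by linarith
  refine squeeze_zero' (Eventually.of_forall fun k => ghDist_nonneg)
    (hsmall.mono fun k hk => ghDist_stdUltra_le (Xk k).metric hU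
      ⟨hnormalCL (Xk k), hnormalSL (Xk k)⟩ hγ hk) ?_
  simpa using h.const_mul 4

/-- every normal, faithful, standard linkage-based hierarchical
clustering method `𝔗 = 𝔗(ℓ,∅)` is semi-stable in the Gromov–Hausdorff sense: if a
sequence of finite metric spaces converges in `d_GH` to a finite ultrametric space
`(U,u)`, then the output ultrametric spaces `𝔗_U(X_k,d_k)` converge in `d_GH`
to `(U,u)`.  Normality says that the linkage value of two distinct blocks of the
dendrogram is at most the maximal cross distance (`ℓ ≤ ℓ^CL`) and that the output
ultrametric dominates the single-linkage ultrametric; faithfulness says that the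
method fixes every finite ultrametric space. -/
theorem stmt18
    (L : ∀ n : ℕ, (Fin n → Fin n → ℝ) → Finset (Fin n) → Finset (Fin n) → ℝ)
    (hL : IsLinkage L)
    (hnormalCL : ∀ M : FinMetricSpace, ∀ r : ℝ, 0 ≤ r → ∀ x y : Fin M.n,
      ¬ dendroRel (L M.n M.d) r x y →
      L M.n M.d (cls (dendroRel (L M.n M.d) r) x) (cls (dendroRel (L M.n M.d) r) y) ≤
        ellCL M.d (cls (dendroRel (L M.n M.d) r) x) (cls (dendroRel (L M.n M.d) r) y))
    (hnormalSL : ∀ M : FinMetricSpace, ∀ x y : Fin M.n,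
      uSL M.d x y ≤ stdUltra (L M.n M.d) x y)
    (hfaithful : ∀ M : FinMetricSpace, IsUltrametricD M.d →
      ∀ x y, stdUltra (L M.n M.d) x y = M.d x y)
    (Xk : ℕ → FinMetricSpace) (U : FinMetricSpace) (hU : IsUltrametricD U.d)
    (h : Filter.Tendsto (fun k => ghDist (Xk k).d U.d) Filter.atTop (nhds 0)) :
    Filter.Tendsto (fun k => ghDist (stdUltra (L (Xk k).n (Xk k).d)) U.d)
      Filter.atTop (nhds 0) :=
  stmt18_general L hnormalCL hnormalSL Xk U hU h
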